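/- arXiv:1708.02273 — 6 statements merged into one kernel-verified Lean document; each statement's English description precedes it below -/
import Mathlib

section
/- Let σ ⊆ ℝ^n be a rational polyhedral cone. Then σ ∩ ℤ^n is a finitely generated additive monoid (Gordan's lemma). -/
open Finset

/-- The canonical map `ℤ^n → ℝ^n`. -/
def coeR {n : ℕ} (x : Fin n → ℤ) : Fin n → ℝ := fun i => (x i : ℝ)

/-- The rational polyhedral cone generated by the integer vectors `a 0, …, a (r-1)`:
all nonnegative real combinations of these vectors. -/
def ratCone {n r : ℕ} (a : Fin r → Fin n → ℤ) : Set (Fin n → ℝ) :=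
  {x | ∃ lam : Fin r → ℝ, (∀ i, 0 ≤ lam i) ∧ x = ∑ i, lam i • coeR (a i)}

lemma coeR_add {n : ℕ} (x y : Fin n → ℤ) : coeR (x + y) = coeR x + coeR y := by
  funext j; simp [coeR]

lemma coeR_zero {n : ℕ} : coeR (0 : Fin n → ℤ) = 0 := by
  funext j; simp [coeR]

/-- **Gordan's lemma.** If `σ ⊆ ℝ^n` is a rational polyhedral cone, then `σ ∩ ℤ^n`
is a finitely generated additive monoid. -/
theorem gordan {n r : ℕ} (a : Fin r → Fin n → ℤ) :
    ∃ S : AddSubmonoid (Fin n → ℤ),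
      (S : Set (Fin n → ℤ)) = {x | coeR x ∈ ratCone a} ∧ S.FG := by
  refine ⟨{ carrier := {x | coeR x ∈ ratCone a}
            zero_mem' := ⟨0, fun i => le_refl 0, by simp [coeR_zero]⟩
            add_mem' := ?_ }, rfl, ?_⟩
  · rintro x y ⟨l1, h1, e1⟩ ⟨l2, h2, e2⟩
    refine ⟨l1 + l2, fun i => add_nonneg (h1 i) (h2 i), ?_⟩
    rw [coeR_add, e1, e2, ← Finset.sum_add_distrib]
    congr 1; funext i; simp [add_smul]
  · -- finitely generated
    set G : Set (Fin n → ℤ) :=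
      {x | ∃ μ : Fin r → ℝ, (∀ i, 0 ≤ μ i ∧ μ i ≤ 1) ∧ coeR x = ∑ i, μ i • coeR (a i)}
      with hGdef
    have hGfin : G.Finite := by
      have hB : G ⊆ Set.pi Set.univ (fun j => Set.Icc (-(∑ i, |a i j|)) (∑ i, |a i j|)) := by
        rintro x ⟨μ, hμ, hx⟩ j _
        have hxj : (x j : ℝ) = ∑ i, μ i * (a i j : ℝ) := by
          have := congrFun hx j
          simpa [coeR, Finset.sum_apply] using this
        have habs : |(x j : ℝ)| ≤ ∑ i, |(a i j : ℝ)| := by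
          rw [hxj]
          calc |∑ i, μ i * (a i j : ℝ)| ≤ ∑ i, |μ i * (a i j : ℝ)| :=
                Finset.abs_sum_le_sum_abs _ _
          _ ≤ ∑ i, |(a i j : ℝ)| := by
              apply Finset.sum_le_sum
              intro i _
              rw [abs_mul]
              have h1 : |μ i| ≤ 1 := abs_le.mpr ⟨by linarith [(hμ i).1], (hμ i).2⟩
              nlinarith [abs_nonneg ((a i j : ℝ))]
        have hint : |x j| ≤ ∑ i, |a i j| := by exact_mod_cast habs
        exact ⟨neg_le_of_abs_le hint, le_of_abs_le hint⟩
      exact (Set.Finite.pi (fun j => Set.finite_Icc _ _)).subset hB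
    rw [AddSubmonoid.fg_iff]
    refine ⟨G, ?_, hGfin⟩
    apply le_antisymm
    · rw [AddSubmonoid.closure_le]
      rintro x ⟨μ, hμ, hx⟩
      exact ⟨μ, fun i => (hμ i).1, hx⟩
    · rintro x ⟨lam, hlam, hx⟩
      -- split lam into integer and fractional parts
      set y : Fin n → ℤ := x - ∑ i, ⌊lam i⌋ • a i with hy
      have hyG : y ∈ G := by
        refine ⟨fun i => Int.fract (lam i),
          fun i => ⟨Int.fract_nonneg _, (Int.fract_lt_one _).le⟩, ?_⟩
        funext j
        have hxj : (x j : ℝ) = ∑ i, lam i * (a i j : ℝ) := by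
          have := congrFun hx j
          simpa [coeR, Finset.sum_apply] using this
        have hyj : (y j : ℝ) = (x j : ℝ) - ∑ i, (⌊lam i⌋ : ℝ) * (a i j : ℝ) := by
          simp [hy, Finset.sum_apply]
        simp only [coeR, Finset.sum_apply, Pi.smul_apply, smul_eq_mul]
        rw [hyj, hxj, ← Finset.sum_sub_distrib]
        congr 1; funext i
        rw [Int.fract]
        ring
      have haG : ∀ i, a i ∈ G := by
        intro i
        refine ⟨fun i' => if i' = i then 1 else 0, ?_, ?_⟩
        · intro i'; by_cases h : i' = i <;> simp [h]
        · rw [Finset.sum_eq_single i]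
          · simp
          · intro b _ hb; simp [hb]
          · intro h; exact absurd (Finset.mem_univ i) h
      have hxeq : x = y + ∑ i, (⌊lam i⌋).toNat • a i := by
        have : ∀ i, (⌊lam i⌋).toNat • a i = ⌊lam i⌋ • a i := by
          intro i
          rw [← natCast_zsmul, Int.toNat_of_nonneg (Int.floor_nonneg.mpr (hlam i))]
        simp only [this]
        rw [hy]; abel
      rw [hxeq]
      exact add_mem (AddSubmonoid.subset_closure hyG)
        (sum_mem fun i _ => nsmul_mem (AddSubmonoid.subset_closure (haG i)) _)
end

section
/- Let σ₁ and σ₂ be rational polyhedral cones in ℝ^n such that τ = σ₁ ∩ σ₂ is a face of both σ₁ and σ₂. Then there exists m ∈ σ₁^∨ ∩ (−σ₂)^∨ such that τ = σ₁ ∩ H_m = σ₂ ∩ H_m, where H_m = {x ∈ ℝ^n : ⟨m,x⟩ = 0} (Separation Lemma). -/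
open Finset

/-- The standard inner product on `ℝ^n`. -/
def innerR {n : ℕ} (m x : Fin n → ℝ) : ℝ := ∑ i, m i * x i

/-- The dual cone of a subset of `ℝ^n`. -/
def dualCone {n : ℕ} (σ : Set (Fin n → ℝ)) : Set (Fin n → ℝ) :=
  {m | ∀ u ∈ σ, 0 ≤ innerR m u}

/-
Let `γ = σ₁ + (-σ₂)`. It is finitely generated, hence closed (conic Carathéodory reduces it to
cones over linearly independent vectors, which are images of an orthant under a closed embedding).
By Farkas' lemma every generator `v` of `γ` with `-v ∉ γ` admits a functional that is
nonnegative on `γ` and positive at `v`; their sum `m` is nonnegative on `γ` and vanishes on `γ`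
only along the lineality space `γ ∩ -γ`. This `m` separates `σ₁` from `σ₂`. If `u ∈ σ₁` and
`⟨m, u⟩ = 0`, write `u = x - y` and `-u = x' - y'` with `x, x' ∈ σ₁` and `y, y' ∈ σ₂`. Then
`x + x' = y + y' ∈ τ`, so `x, y ∈ τ` since `τ` is a face of both cones, and finally `u ∈ τ`
because `u + y = x`. The same argument with the roles exchanged handles `σ₂`.
-/

open Set Pointwise

lemma Submodule.FG.neg {R M : Type*} [Semiring R] [AddCommGroup M] [Module R M]
    {p : Submodule R M} (hp : p.FG) : (-p).FG := by
  obtain ⟨s, hs, rfl⟩ := Submodule.fg_def.mp hp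
  exact Submodule.fg_def.mpr ⟨-s, hs.neg, Submodule.span_neg_eq_neg s⟩

namespace PointedCone

section Ring

variable {R M : Type*} [Ring R] [LinearOrder R] [IsOrderedRing R] [AddCommGroup M] [Module R M]

lemma mem_sup_neg_iff {C D : PointedCone R M} {x : M} :
    x ∈ C ⊔ -D ↔ ∃ y ∈ C, ∃ z ∈ D, y - z = x := by
  simp only [Submodule.mem_sup, Submodule.mem_neg]
  constructor
  · rintro ⟨y, hy, z, hz, rfl⟩
    exact ⟨y, hy, -z, hz, sub_neg_eq_add y z⟩
  · rintro ⟨y, hy, z, hz, rfl⟩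
    exact ⟨y, hy, -z, by rwa [neg_neg], (sub_eq_add_neg y z).symm⟩

lemma neg_mem_sup_neg_iff {C D : PointedCone R M} {x : M} : -x ∈ C ⊔ -D ↔ x ∈ D ⊔ -C := by
  rw [mem_sup_neg_iff, mem_sup_neg_iff]
  constructor
  · rintro ⟨y, hy, z, hz, h⟩
    exact ⟨z, hz, y, hy, by rw [← neg_sub, h, neg_neg]⟩
  · rintro ⟨y, hy, z, hz, rfl⟩
    exact ⟨z, hz, y, hy, (neg_sub y z).symm⟩

lemma lineal_sup_neg_comm (C D : PointedCone R M) : (C ⊔ -D).lineal = (D ⊔ -C).lineal := by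
  ext x
  simp only [mem_lineal, ← neg_mem_sup_neg_iff (C := C), neg_neg, and_comm]

lemma IsFaceOf.mem_inf_of_mem_lineal_sup_neg {σ₁ σ₂ : PointedCone R M}
    (h₁ : (σ₁ ⊓ σ₂).IsFaceOf σ₁) (h₂ : (σ₁ ⊓ σ₂).IsFaceOf σ₂) {u : M} (hu : u ∈ σ₁)
    (hl : u ∈ (σ₁ ⊔ -σ₂).lineal) : u ∈ σ₁ ⊓ σ₂ := by
  obtain ⟨x, hx, y, hy, rfl⟩ := mem_sup_neg_iff.mp hl.1
  obtain ⟨x', hx', y', hy', hneg⟩ := mem_sup_neg_iff.mp hl.2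
  have hsum : x + x' = y + y' := by
    rw [← sub_eq_zero]
    calc x + x' - (y + y') = (x - y) + (x' - y') := by abel
      _ = 0 := by rw [hneg, add_neg_cancel]
  have hτ : x + x' ∈ σ₁ ⊓ σ₂ := ⟨add_mem hx hx', hsum ▸ add_mem hy hy'⟩
  have hxτ : x ∈ σ₁ ⊓ σ₂ := h₁.mem_of_add_mem_left hx hx' hτ
  have hyτ : y ∈ σ₁ ⊓ σ₂ := h₂.mem_of_add_mem_left hy hy' (hsum ▸ hτ)
  exact h₁.mem_of_add_mem_left hu hyτ.1 (by rwa [sub_add_cancel])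

end Ring

section LinearOrderedField

variable {𝕜 M ι : Type*} [Field 𝕜] [LinearOrder 𝕜] [IsStrictOrderedRing 𝕜]
  [AddCommGroup M] [Module 𝕜 M] {v : ι → M}

lemma IsFaceOf.of_coe_eq_inter_ker {F C : PointedCone 𝕜 M} (f : M →ₗ[𝕜] 𝕜)
    (hf : ∀ x ∈ C, 0 ≤ f x) (hF : (F : Set M) = (C : Set M) ∩ {x | f x = 0}) : F.IsFaceOf C := by
  refine of_mem_of_add_mem_left (fun x hx => (hF.le hx).1) fun {x y} hx hy hxy => ?_
  rw [← SetLike.mem_coe, hF] at hxy ⊢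
  have hxy0 : f x + f y = 0 := by simpa using hxy.2
  exact ⟨hx, show f x = 0 by linarith [hf x hx, hf y hy]⟩

lemma mem_hull_range_iff [Fintype ι] {x : M} :
    x ∈ hull 𝕜 (range v) ↔ ∃ c : ι → 𝕜, 0 ≤ c ∧ ∑ i, c i • v i = x := by
  rw [Submodule.mem_span_range_iff_exists_fun]
  constructor
  · rintro ⟨c, rfl⟩
    exact ⟨fun i => c i, fun i => (c i).2, rfl⟩
  · rintro ⟨c, hc, rfl⟩
    exact ⟨fun i => ⟨c i, hc i⟩, rfl⟩

lemma sum_smul_mem_hull_image {s : Finset ι} {c : ι → 𝕜} (hc : ∀ i ∈ s, 0 ≤ c i) :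
    ∑ i ∈ s, c i • v i ∈ hull 𝕜 (v '' s) :=
  Submodule.sum_mem _ fun i hi => smul_mem _ (hc i hi) (subset_hull (mem_image_of_mem v hi))

/-- The reduction step of the conic Carathéodory theorem: move along a linear relation among the
generators until a first coefficient vanishes. -/
lemma exists_sum_erase_smul_eq_of_not_linearIndepOn [DecidableEq ι] {s : Finset ι}
    (hs : ¬LinearIndepOn 𝕜 v s) {c : ι → 𝕜} (hc : ∀ i ∈ s, 0 ≤ c i) :
    ∃ i₀ ∈ s, ∃ d : ι → 𝕜, (∀ i ∈ s.erase i₀, 0 ≤ d i) ∧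
      ∑ i ∈ s.erase i₀, d i • v i = ∑ i ∈ s, c i • v i := by
  obtain ⟨g, hg, hpos⟩ : ∃ g : ι → 𝕜, ∑ i ∈ s, g i • v i = 0 ∧ (s.filter (0 < g ·)).Nonempty := by
    obtain ⟨g, hg, i, hi, hgi⟩ := not_linearIndepOn_finset_iff.mp hs
    rcases hgi.lt_or_gt with hgi | hgi
    · exact ⟨-g, by simp [neg_smul, hg], i, by simpa [hi] using hgi⟩
    · exact ⟨g, hg, i, by simpa [hi] using hgi⟩
  obtain ⟨i₀, hi₀, hmin⟩ := (s.filter (0 < g ·)).exists_min_image (fun i => c i / g i) hpos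
  rw [Finset.mem_filter] at hi₀
  set t := c i₀ / g i₀
  have ht : 0 ≤ t := div_nonneg (hc i₀ hi₀.1) hi₀.2.le
  have hd : ∀ i ∈ s, 0 ≤ c i - t * g i := by
    intro i hi
    rcases le_or_gt (g i) 0 with hgi | hgi
    · nlinarith [hc i hi]
    · rw [sub_nonneg, ← le_div_iff₀ hgi]
      exact hmin i (Finset.mem_filter.mpr ⟨hi, hgi⟩)
  refine ⟨i₀, hi₀.1, fun i => c i - t * g i, fun i hi => hd i (Finset.mem_of_mem_erase hi), ?_⟩
  rw [Finset.sum_erase _ (by simp [t, div_mul_cancel₀ _ hi₀.2.ne'])]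
  simp only [sub_smul, mul_smul, Finset.sum_sub_distrib, ← Finset.smul_sum, hg, smul_zero,
    sub_zero]

lemma exists_linearIndepOn_sum_smul_eq (s : Finset ι) {c : ι → 𝕜} (hc : ∀ i ∈ s, 0 ≤ c i) :
    ∃ t ⊆ s, LinearIndepOn 𝕜 v t ∧ ∃ d : ι → 𝕜, (∀ i ∈ t, 0 ≤ d i) ∧
      ∑ i ∈ t, d i • v i = ∑ i ∈ s, c i • v i := by
  classical
  induction s using Finset.strongInduction generalizing c with
  | H s ih =>
    by_cases hs : LinearIndepOn 𝕜 v s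
    · exact ⟨s, subset_rfl, hs, c, hc, rfl⟩
    obtain ⟨i₀, hi₀, d, hd, hsum⟩ := exists_sum_erase_smul_eq_of_not_linearIndepOn hs hc
    obtain ⟨t, hts, ht, e, he, heq⟩ := ih _ (Finset.erase_ssubset hi₀) hd
    exact ⟨t, hts.trans (Finset.erase_subset _ _), ht, e, he, heq.trans hsum⟩

lemma coe_hull_range_eq_iUnion [Fintype ι] :
    (hull 𝕜 (range v) : Set M) =
      ⋃ t : {t : Finset ι // LinearIndepOn 𝕜 v t}, hull 𝕜 (v '' t.1) := by
  ext x
  simp only [SetLike.mem_coe, mem_iUnion]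
  constructor
  · intro hx
    obtain ⟨c, hc, rfl⟩ := mem_hull_range_iff.mp hx
    obtain ⟨t, -, ht, d, hd, heq⟩ :=
      exists_linearIndepOn_sum_smul_eq (v := v) Finset.univ fun i _ => hc i
    exact ⟨⟨t, ht⟩, by simpa [heq] using sum_smul_mem_hull_image (v := v) hd⟩
  · rintro ⟨t, hx⟩
    exact Submodule.span_mono (image_subset_range v _) hx

end LinearOrderedField

section Normed

variable {E ι : Type*} [NormedAddCommGroup E] [NormedSpace ℝ E]

lemma isClosed_hull_range_of_linearIndependent [Fintype ι] {v : ι → E}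
    (hv : LinearIndependent ℝ v) : IsClosed (hull ℝ (range v) : Set E) := by
  have hemb : Topology.IsClosedEmbedding (Fintype.linearCombination ℝ v) :=
    LinearMap.isClosedEmbedding_of_injective (LinearMap.ker_eq_bot.mpr
      (linearIndependent_iff_injective_fintypeLinearCombination.mp hv))
  have himage : (hull ℝ (range v) : Set E) = Fintype.linearCombination ℝ v '' Ici 0 := by
    ext x
    simp [mem_hull_range_iff, Fintype.linearCombination_apply]
  rw [himage]
  exact hemb.isClosedMap _ isClosed_Ici

lemma isClosed_hull_range [Finite ι] (v : ι → E) : IsClosed (hull ℝ (range v) : Set E) := by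
  have := Fintype.ofFinite ι
  rw [coe_hull_range_eq_iUnion]
  refine isClosed_iUnion_of_finite fun t => ?_
  rw [image_eq_range]
  exact isClosed_hull_range_of_linearIndependent t.2

lemma isClosed_of_fg {C : PointedCone ℝ E} (hC : C.FG) : IsClosed (C : Set E) := by
  obtain ⟨k, v, rfl⟩ := Submodule.fg_iff_exists_fin_generating_family.mp hC
  exact isClosed_hull_range v

variable {C : PointedCone ℝ E}

lemma exists_nonneg_pos_of_fg_of_neg_notMem (hC : C.FG) {x : E} (hx : -x ∉ C) :
    ∃ f : StrongDual ℝ E, (∀ y ∈ C, 0 ≤ f y) ∧ 0 < f x := by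
  obtain ⟨f, hf, hfx⟩ := ProperCone.hyperplane_separation_point ⟨C, isClosed_of_fg hC⟩ hx
  exact ⟨f, hf, by simpa using hfx⟩

lemma exists_nonneg_ker_le_lineal_of_fg (hC : C.FG) :
    ∃ f : StrongDual ℝ E, (∀ x ∈ C, 0 ≤ f x) ∧ ∀ x ∈ C, f x = 0 → x ∈ C.lineal := by
  obtain ⟨k, v, rfl⟩ := Submodule.fg_iff_exists_fin_generating_family.mp hC
  have hgen : ∀ i, ∃ f : StrongDual ℝ E,
      (∀ y ∈ hull ℝ (range v), 0 ≤ f y) ∧ (-v i ∉ hull ℝ (range v) → 0 < f (v i)) := by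
    intro i
    by_cases hi : -v i ∈ hull ℝ (range v)
    · exact ⟨0, fun _ _ => le_rfl, absurd hi⟩
    · obtain ⟨f, hf, hfi⟩ := exists_nonneg_pos_of_fg_of_neg_notMem hC hi
      exact ⟨f, hf, fun _ => hfi⟩
  choose f hf_nonneg hf_pos using hgen
  set F := ∑ i, f i with hF
  have hF_nonneg : ∀ y ∈ hull ℝ (range v), 0 ≤ F y := fun y hy => by
    simpa [hF] using Finset.sum_nonneg fun i _ => hf_nonneg i y hy
  refine ⟨F, hF_nonneg, fun x hx hx0 => ⟨hx, ?_⟩⟩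
  obtain ⟨c, hc, rfl⟩ := mem_hull_range_iff.mp hx
  have hvanish : ∀ i, c i * F (v i) = 0 := by
    have hterms : ∀ i ∈ Finset.univ, 0 ≤ c i * F (v i) := fun i _ =>
      mul_nonneg (hc i) (hF_nonneg _ (subset_hull (mem_range_self i)))
    simp only [map_sum, map_smul, smul_eq_mul] at hx0
    simpa using (Finset.sum_eq_zero_iff_of_nonneg hterms).mp hx0
  show -∑ i, c i • v i ∈ hull ℝ (range v)
  rw [← Finset.sum_neg_distrib]
  refine Submodule.sum_mem _ fun i _ => ?_
  by_cases hi : -v i ∈ hull ℝ (range v)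
  · rw [← smul_neg]
    exact smul_mem _ (hc i) hi
  · have hpos : 0 < F (v i) := by
      simpa [hF] using Finset.sum_pos' (fun j _ => hf_nonneg j _ (subset_hull (mem_range_self i)))
        ⟨i, Finset.mem_univ i, hf_pos i hi⟩
    simp [(mul_eq_zero.mp (hvanish i)).resolve_right hpos.ne']

theorem exists_separating_of_isFaceOf {σ₁ σ₂ : PointedCone ℝ E} (h₁ : σ₁.FG) (h₂ : σ₂.FG)
    (hτ₁ : (σ₁ ⊓ σ₂).IsFaceOf σ₁) (hτ₂ : (σ₁ ⊓ σ₂).IsFaceOf σ₂) :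
    ∃ f : StrongDual ℝ E, (∀ x ∈ σ₁, 0 ≤ f x) ∧ (∀ x ∈ σ₂, f x ≤ 0) ∧
      (σ₁ : Set E) ∩ {x | f x = 0} = ↑(σ₁ ⊓ σ₂) ∧ (σ₂ : Set E) ∩ {x | f x = 0} = ↑(σ₁ ⊓ σ₂) := by
  obtain ⟨f, hf, hker⟩ := exists_nonneg_ker_le_lineal_of_fg (h₁.sup h₂.neg)
  have hσ₁ : ∀ x ∈ σ₁, x ∈ σ₁ ⊔ -σ₂ := fun x hx => Submodule.mem_sup_left hx
  have hσ₂ : ∀ x ∈ σ₂, -x ∈ σ₁ ⊔ -σ₂ := fun x hx =>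
    Submodule.mem_sup_right (Submodule.mem_neg.mpr (by rwa [neg_neg]))
  have hσ₂_nonpos : ∀ x ∈ σ₂, f x ≤ 0 := fun x hx => by
    simpa using hf _ (hσ₂ x hx)
  have hτ_ker : ∀ x ∈ σ₁ ⊓ σ₂, x ∈ {x | f x = 0} := fun x hx =>
    le_antisymm (hσ₂_nonpos x hx.2) (hf x (hσ₁ x hx.1))
  refine ⟨f, fun x hx => hf x (hσ₁ x hx), hσ₂_nonpos, ?_, ?_⟩
  · refine subset_antisymm (fun x ⟨hx, hx0⟩ => ?_) fun x hx => ⟨hx.1, hτ_ker x hx⟩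
    exact hτ₁.mem_inf_of_mem_lineal_sup_neg hτ₂ hx (hker x (hσ₁ x hx) hx0)
  · refine subset_antisymm (fun x ⟨hx, hx0⟩ => ?_) fun x hx => ⟨hx.2, hτ_ker x hx⟩
    have hlin : -x ∈ (σ₁ ⊔ -σ₂).lineal := hker _ (hσ₂ x hx) (by simpa using hx0)
    rw [inf_comm] at hτ₁ hτ₂ ⊢
    rw [lineal_sup_neg_comm] at hlin
    exact hτ₂.mem_inf_of_mem_lineal_sup_neg hτ₁ hx (by simpa using Submodule.neg_mem _ hlin)

end Normed

end PointedCone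

open PointedCone

lemma ratCone_eq_hull {n r : ℕ} (a : Fin r → Fin n → ℤ) :
    ratCone a = hull ℝ (range fun i => coeR (a i)) := by
  ext x
  simp only [ratCone, SetLike.mem_coe, mem_hull_range_iff, Pi.le_def, Pi.zero_apply, eq_comm]
  rfl

lemma innerR_eq_apply {n : ℕ} (f : (Fin n → ℝ) →ₗ[ℝ] ℝ) (x : Fin n → ℝ) :
    innerR (fun i => f (Pi.single i 1)) x = f x := by
  conv_rhs => rw [pi_eq_sum_univ' x, map_sum]
  simp [innerR, mul_comm]

/-- **Separation Lemma.** If `σ₁`, `σ₂` are rational polyhedral cones in `ℝ^n` whose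
intersection `τ = σ₁ ∩ σ₂` is a face of both, then there exists
`m ∈ σ₁^∨ ∩ (−σ₂)^∨` with `τ = σ₁ ∩ H_m = σ₂ ∩ H_m`, where
`H_m = {x : ⟨m,x⟩ = 0}`. -/
theorem separation_lemma {n r₁ r₂ : ℕ} (a : Fin r₁ → Fin n → ℤ) (b : Fin r₂ → Fin n → ℤ)
    (τ : Set (Fin n → ℝ)) (hτ : τ = ratCone a ∩ ratCone b)
    (hface₁ : ∃ m ∈ dualCone (ratCone a), τ = ratCone a ∩ {x | innerR m x = 0})
    (hface₂ : ∃ m ∈ dualCone (ratCone b), τ = ratCone b ∩ {x | innerR m x = 0}) :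
    ∃ m : Fin n → ℝ, m ∈ dualCone (ratCone a) ∧ m ∈ dualCone ((fun x => -x) '' ratCone b) ∧
      τ = ratCone a ∩ {x | innerR m x = 0} ∧ τ = ratCone b ∩ {x | innerR m x = 0} := by
  obtain ⟨m₁, hm₁, hτ₁⟩ := hface₁
  obtain ⟨m₂, hm₂, hτ₂⟩ := hface₂
  simp only [ratCone_eq_hull] at hτ hm₁ hm₂ hτ₁ hτ₂ ⊢
  set σ₁ := hull ℝ (range fun i => coeR (a i))
  set σ₂ := hull ℝ (range fun i => coeR (b i))
  have hF₁ : (σ₁ ⊓ σ₂).IsFaceOf σ₁ :=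
    .of_coe_eq_inter_ker (dotProductBilin ℝ ℝ m₁) hm₁ (hτ.symm.trans hτ₁)
  have hF₂ : (σ₁ ⊓ σ₂).IsFaceOf σ₂ :=
    .of_coe_eq_inter_ker (dotProductBilin ℝ ℝ m₂) hm₂ (hτ.symm.trans hτ₂)
  obtain ⟨f, hf₁, hf₂, hker₁, hker₂⟩ := exists_separating_of_isFaceOf
    (Submodule.fg_span (finite_range _)) (Submodule.fg_span (finite_range _)) hF₁ hF₂
  have hm := innerR_eq_apply f.toLinearMap
  simp only [ContinuousLinearMap.coe_coe] at hm
  refine ⟨fun i => f (Pi.single i 1), fun u hu => ?_, ?_, ?_, ?_⟩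
  · rw [hm]; exact hf₁ u hu
  · rintro _ ⟨y, hy, rfl⟩
    rw [hm, map_neg, neg_nonneg]
    exact hf₂ y hy
  · simpa only [hm] using hτ.trans hker₁.symm
  · simpa only [hm] using hτ.trans hker₂.symm
end

section
/- Let σ ⊆ ℝ^n be a rational polyhedral cone that spans ℝ^n, and let S = σ^∨ ∩ ℤ^n. Let H be the set of irreducible elements of S, i.e., nonzero s ∈ S that cannot be written as s = s₁ + s₂ with s₁, s₂ ∈ S both nonzero. Then H is finite, H generates S as an additive monoid, and H is contained in every generating set of S; hence H is the unique minimal finite generating set of S (the Hilbert basis of S). -/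
open Finset

/-- The monoid `S = σ^∨ ∩ ℤ^n` of lattice points of the dual cone of the rational
polyhedral cone `σ = Cone(a₁,…,a_r)`, as an additive submonoid of `ℤ^n`. -/
def dualLatticeMonoid {n r : ℕ} (a : Fin r → Fin n → ℤ) : AddSubmonoid (Fin n → ℤ) where
  carrier := {x | coeR x ∈ dualCone (ratCone a)}
  zero_mem' := by
    intro u _
    simp [innerR, coeR]
  add_mem' := by
    intro x y hx hy u hu
    have h1 := hx u hu
    have h2 := hy u hu
    simp only [innerR, coeR, Pi.add_apply, Int.cast_add, add_mul,
      Finset.sum_add_distrib] at h1 h2 ⊢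
    linarith

/-- The set of irreducible elements of `S = σ^∨ ∩ ℤ^n`: nonzero elements that are not the
sum of two nonzero elements of `S`. -/
def hilbertSet {n r : ℕ} (a : Fin r → Fin n → ℤ) : Set (Fin n → ℤ) :=
  {s | s ∈ dualLatticeMonoid a ∧ s ≠ 0 ∧
    ¬∃ s₁ s₂ : Fin n → ℤ, s₁ ∈ dualLatticeMonoid a ∧ s₂ ∈ dualLatticeMonoid a ∧
      s₁ ≠ 0 ∧ s₂ ≠ 0 ∧ s = s₁ + s₂}

/-!
The pairings with the generators of `σ`, `φ m = (⟨m, aᵢ⟩)ᵢ`, embed `S` into `ℕ^r`: `φ` is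
nonnegative on `S` by definition, and injective because `σ` spans `ℝ^n`, so `S` is the preimage
of the positive orthant under an injective linear map. The irreducible elements then form an
antichain for the componentwise order (if `φ x ≤ φ y` then `y = x + (y - x)` in `S`), hence are
finitely many by Dickson's lemma. The total degree `∑ᵢ ⟨m, aᵢ⟩` strictly decreases when a
reducible element is split, so every element of `S` is a sum of irreducibles. Minimality holds in
any monoid: in a sum of elements of `T` equal to an irreducible, all summands but one vanish.
-/

namespace AddSubmonoid

variable {M : Type*}

def irreducibles [AddZeroClass M] (S : AddSubmonoid M) : Set M :=
  {s | s ∈ S ∧ s ≠ 0 ∧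
    ¬∃ s₁ s₂ : M, s₁ ∈ S ∧ s₂ ∈ S ∧ s₁ ≠ 0 ∧ s₂ ≠ 0 ∧ s = s₁ + s₂}

section AddZeroClass

variable [AddZeroClass M] {S : AddSubmonoid M}

theorem eq_zero_or_eq_zero_of_mem_irreducibles {s x y : M} (hs : s ∈ S.irreducibles)
    (hx : x ∈ S) (hy : y ∈ S) (hxy : s = x + y) : x = 0 ∨ y = 0 := by
  by_contra! h
  exact hs.2.2 ⟨x, y, hx, hy, h.1, h.2, hxy⟩

theorem mem_of_mem_irreducibles_of_mem_closure {T : Set M} (hT : T ⊆ S) {s : M}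
    (hs : s ∈ S.irreducibles) (hsT : s ∈ closure T) : s ∈ T := by
  have hle : closure T ≤ S := closure_le.mpr hT
  induction hsT using closure_induction with
  | mem x hx => exact hx
  | zero => exact absurd rfl hs.2.1
  | add x y hx hy ihx ihy =>
    rcases eq_zero_or_eq_zero_of_mem_irreducibles hs (hle hx) (hle hy) rfl with rfl | rfl
    · rw [zero_add] at hs ⊢
      exact ihy hs
    · rw [add_zero] at hs ⊢
      exact ihx hs

end AddZeroClass

section AddCommMonoid

variable [AddCommMonoid M] {S : AddSubmonoid M}

theorem mem_closure_irreducibles_of_degree (deg : M → ℕ)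
    (hdeg : ∀ x ∈ S, ∀ y ∈ S, y ≠ 0 → deg x < deg (x + y)) {s : M} (hs : s ∈ S) :
    s ∈ closure S.irreducibles := by
  induction h : deg s using Nat.strong_induction_on generalizing s with
  | _ d ih =>
    by_cases h0 : s = 0
    · exact h0 ▸ zero_mem _
    by_cases hirr : s ∈ S.irreducibles
    · exact subset_closure hirr
    obtain ⟨x, y, hx, hy, hx0, hy0, rfl⟩ :
        ∃ x y, x ∈ S ∧ y ∈ S ∧ x ≠ 0 ∧ y ≠ 0 ∧ s = x + y := by
      simpa [irreducibles, hs, h0] using hirr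
    refine add_mem (ih _ (h ▸ hdeg x hx y hy hy0) hx rfl) (ih _ ?_ hy rfl)
    rw [← h, add_comm]
    exact hdeg y hy x hx hx0

theorem closure_irreducibles_eq_of_degree (deg : M → ℕ)
    (hdeg : ∀ x ∈ S, ∀ y ∈ S, y ≠ 0 → deg x < deg (x + y)) : closure S.irreducibles = S :=
  le_antisymm (closure_le.mpr fun _ hs => hs.1) fun _ hs =>
    mem_closure_irreducibles_of_degree deg hdeg hs

end AddCommMonoid

section Lattice

variable [AddCommGroup M] {ι : Type*} [Fintype ι] {S : AddSubmonoid M} (φ : M →+ (ι → ℤ))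

theorem irreducibles_finite_of_injective (hφ : Function.Injective φ)
    (hS : ∀ m, m ∈ S ↔ 0 ≤ φ m) : S.irreducibles.Finite := by
  set χ : M → ι → ℕ := fun m i => (φ m i).toNat
  have hχ : ∀ x ∈ S, ∀ y ∈ S, χ x ≤ χ y → φ x ≤ φ y := fun x hx y hy h i => by
    have hxy : (φ x i).toNat ≤ (φ y i).toNat := h i
    have hx' : 0 ≤ φ x i := (hS x).1 hx i
    have hy' : 0 ≤ φ y i := (hS y).1 hy i
    show φ x i ≤ φ y i
    omega
  have hinj : Set.InjOn χ S.irreducibles := fun x hx y hy h =>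
    hφ (le_antisymm (hχ x hx.1 y hy.1 h.le) (hχ y hy.1 x hx.1 h.ge))
  have hanti : IsAntichain (· ≤ ·) (χ '' S.irreducibles) := by
    rintro _ ⟨x, hx, rfl⟩ _ ⟨y, hy, rfl⟩ hne hxy
    have hyx : y - x ∈ S := (hS _).2 (by simpa [map_sub] using hχ x hx.1 y hy.1 hxy)
    rcases eq_zero_or_eq_zero_of_mem_irreducibles hy hx.1 hyx (add_sub_cancel x y).symm with
      h | h
    · exact hx.2.1 h
    · exact hne (by rw [sub_eq_zero.mp h])
  exact (hanti.finite_of_partiallyWellOrderedOn (Set.isPWO_of_wellQuasiOrderedLE _)).of_finite_image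
    hinj

theorem closure_irreducibles_eq_of_injective (hφ : Function.Injective φ)
    (hS : ∀ m, m ∈ S ↔ 0 ≤ φ m) : closure S.irreducibles = S := by
  refine closure_irreducibles_eq_of_degree (fun m => (∑ i, φ m i).toNat) fun x hx y hy hy0 => ?_
  have hx' : 0 ≤ ∑ i, φ x i := Fintype.sum_nonneg ((hS x).1 hx)
  have hy' : 0 < ∑ i, φ y i :=
    Fintype.sum_pos (lt_of_le_of_ne ((hS y).1 hy) (by rwa [ne_comm, ← map_zero φ, hφ.ne_iff]))
  simp only [map_add, Pi.add_apply, Finset.sum_add_distrib]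
  omega

end Lattice

end AddSubmonoid

section DualCone

open Matrix

variable {n r : ℕ} (a : Fin r → Fin n → ℤ)

theorem hilbertSet_eq_irreducibles : hilbertSet a = (dualLatticeMonoid a).irreducibles := rfl

theorem innerR_coeR_sum_smul (m : Fin n → ℤ) (lam : Fin r → ℝ) :
    innerR (coeR m) (∑ i, lam i • coeR (a i)) = ∑ i, lam i * ((Matrix.of a *ᵥ m) i : ℝ) := by
  change coeR m ⬝ᵥ _ = _
  simp only [dotProduct_sum, dotProduct_smul, smul_eq_mul]
  refine Finset.sum_congr rfl fun i _ => ?_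
  simp [dotProduct, coeR, mulVec, mul_comm]

theorem mem_dualLatticeMonoid_iff (m : Fin n → ℤ) :
    m ∈ dualLatticeMonoid a ↔ 0 ≤ Matrix.of a *ᵥ m := by
  constructor
  · intro hm i
    have := hm _ ⟨Pi.single i 1, (Pi.single_nonneg (α := fun _ => ℝ)).2 zero_le_one, rfl⟩
    rw [innerR_coeR_sum_smul] at this
    simpa [Pi.single_apply] using this
  · rintro h u ⟨lam, hlam, rfl⟩
    rw [innerR_coeR_sum_smul]
    exact Finset.sum_nonneg fun i _ => mul_nonneg (hlam i) (by exact_mod_cast h i)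

theorem mulVec_injective_of_span_eq_top (hspan : Submodule.span ℝ (ratCone a) = ⊤) :
    Function.Injective (Matrix.of a).mulVec := by
  intro x y hxy
  have hker : Matrix.of a *ᵥ (x - y) = 0 := by rw [mulVec_sub, hxy, sub_self]
  have horth : ∀ u ∈ Submodule.span ℝ (ratCone a), coeR (x - y) ⬝ᵥ u = 0 := by
    intro u hu
    induction hu using Submodule.span_induction with
    | mem u hu =>
      obtain ⟨lam, -, rfl⟩ := hu
      exact (innerR_coeR_sum_smul a _ lam).trans (by simp [hker])
    | zero => exact dotProduct_zero _
    | add u v _ _ hu hv => rw [dotProduct_add, hu, hv, add_zero]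
    | smul c u _ hu => rw [dotProduct_smul, hu, smul_zero]
  have hself := horth (coeR (x - y)) (hspan ▸ Submodule.mem_top)
  rw [dotProduct_self_eq_zero] at hself
  exact sub_eq_zero.mp (funext fun j => Int.cast_eq_zero.mp (congrFun hself j))

end DualCone

/-- **Hilbert basis.** Let `σ ⊆ ℝ^n` be a rational polyhedral cone spanning `ℝ^n` and
`S = σ^∨ ∩ ℤ^n`. The set `H` of irreducible elements of `S` is finite, generates `S`,
and is contained in every generating set of `S`; hence `H` is the unique minimal finite
generating set (the Hilbert basis) of `S`. -/
theorem hilbert_basis {n r : ℕ} (a : Fin r → Fin n → ℤ)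
    (hspan : Submodule.span ℝ (ratCone a) = ⊤) :
    (hilbertSet a).Finite ∧
      AddSubmonoid.closure (hilbertSet a) = dualLatticeMonoid a ∧
      ∀ T : Set (Fin n → ℤ), T ⊆ (dualLatticeMonoid a : Set (Fin n → ℤ)) →
        AddSubmonoid.closure T = dualLatticeMonoid a → hilbertSet a ⊆ T := by
  let φ : (Fin n → ℤ) →+ (Fin r → ℤ) := (Matrix.of a).mulVecLin.toAddMonoidHom
  have hφ : Function.Injective φ := mulVec_injective_of_span_eq_top a hspan
  have hS : ∀ m, m ∈ dualLatticeMonoid a ↔ 0 ≤ φ m := mem_dualLatticeMonoid_iff a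
  rw [hilbertSet_eq_irreducibles]
  exact ⟨AddSubmonoid.irreducibles_finite_of_injective φ hφ hS,
    AddSubmonoid.closure_irreducibles_eq_of_injective φ hφ hS, fun T hT hcl s hs =>
      AddSubmonoid.mem_of_mem_irreducibles_of_mem_closure hT hs (hcl ▸ hs.1)⟩
end

section
/- An ideal I ⊆ ℂ[t₁,…,t_n] is a toric ideal if and only if I is prime and I is generated by binomials, i.e., by polynomials of the form t^α − t^β with α, β ∈ ℕ^n. -/
open MvPolynomial

/-- The lattice ideal `I_L ⊆ ℂ[t₁,…,t_n]` of a sublattice `L ⊆ ℤ^n`: the ideal generated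
by the binomials `t^α − t^β` with `α, β ∈ ℕ^n` and `α − β ∈ L`. -/
noncomputable def latticeIdeal {n : ℕ} (L : AddSubgroup (Fin n → ℤ)) :
    Ideal (MvPolynomial (Fin n) ℂ) :=
  Ideal.span {f | ∃ α β : Fin n →₀ ℕ,
    (fun i => (α i : ℤ) - (β i : ℤ)) ∈ L ∧
    f = monomial α (1 : ℂ) - monomial β (1 : ℂ)}

/-- An ideal of `ℂ[t₁,…,t_n]` is toric if it is a prime lattice ideal. -/
def IsToricIdeal {n : ℕ} (I : Ideal (MvPolynomial (Fin n) ℂ)) : Prop :=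
  I.IsPrime ∧ ∃ L : AddSubgroup (Fin n → ℤ), I = latticeIdeal L

-- monomials are not in a binomial-generated ideal
lemma mono_not_mem {n : ℕ} {I : Ideal (MvPolynomial (Fin n) ℂ)}
    {B : Set (MvPolynomial (Fin n) ℂ)}
    (hBbin : ∀ f ∈ B, ∃ α β : Fin n →₀ ℕ, f = monomial α (1 : ℂ) - monomial β (1 : ℂ))
    (hIB : I = Ideal.span B) (c : Fin n →₀ ℕ) : monomial c (1 : ℂ) ∉ I := by
  set φ : MvPolynomial (Fin n) ℂ →+* ℂ := eval (fun _ => (1:ℂ)) with hφ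
  have hker : I ≤ RingHom.ker φ := by
    rw [hIB, Ideal.span_le]
    intro f hf
    obtain ⟨α, β, rfl⟩ := hBbin f hf
    simp [RingHom.mem_ker, hφ, eval_monomial, Finsupp.prod]
  intro hc
  have := hker hc
  simp [RingHom.mem_ker, hφ, eval_monomial, Finsupp.prod] at this

lemma key {n : ℕ} {I : Ideal (MvPolynomial (Fin n) ℂ)} (hI : I.IsPrime)
    (hmono : ∀ c : Fin n →₀ ℕ, monomial c (1 : ℂ) ∉ I)
    (a b α β : Fin n →₀ ℕ)
    (hab : monomial a (1:ℂ) - monomial b 1 ∈ I)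
    (h : ∀ i, (α i : ℤ) - β i = (a i : ℤ) - b i) :
    monomial α (1:ℂ) - monomial β 1 ∈ I := by
  have h1 : (a - α) + α = (α - a) + a := by
    ext i
    have := h i
    simp only [Finsupp.add_apply, Finsupp.tsub_apply]
    omega
  have h2 : (a - α) + β = (α - a) + b := by
    ext i
    have := h i
    simp only [Finsupp.add_apply, Finsupp.tsub_apply]
    omega
  have hmul : monomial (a - α) (1:ℂ) * (monomial α 1 - monomial β 1)
      = monomial (α - a) 1 * (monomial a 1 - monomial b 1) := by
    rw [mul_sub, mul_sub, monomial_mul, monomial_mul, monomial_mul, monomial_mul, h1, h2]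
  have hmem : monomial (a - α) (1:ℂ) * (monomial α 1 - monomial β 1) ∈ I := by
    rw [hmul]; exact I.mul_mem_left _ hab
  rcases hI.mem_or_mem hmem with h' | h'
  · exact absurd h' (hmono _)
  · exact h'

/-- An ideal `I ⊆ ℂ[t₁,…,t_n]` is toric if and only if it is prime and generated by
binomials `t^α − t^β` with `α, β ∈ ℕ^n`. -/
theorem isToricIdeal_iff_prime_and_binomial_generated {n : ℕ}
    (I : Ideal (MvPolynomial (Fin n) ℂ)) :
    IsToricIdeal I ↔
      I.IsPrime ∧ ∃ B : Set (MvPolynomial (Fin n) ℂ),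
        (∀ f ∈ B, ∃ α β : Fin n →₀ ℕ, f = monomial α (1 : ℂ) - monomial β (1 : ℂ)) ∧
        I = Ideal.span B := by
  constructor
  · rintro ⟨hP, L, hL⟩
    refine ⟨hP, {f | ∃ α β : Fin n →₀ ℕ,
      (fun i => (α i : ℤ) - (β i : ℤ)) ∈ L ∧
      f = monomial α (1 : ℂ) - monomial β (1 : ℂ)}, ?_, hL⟩
    rintro f ⟨α, β, -, rfl⟩
    exact ⟨α, β, rfl⟩
  · rintro ⟨hP, B, hBbin, hIB⟩
    have hmono := mono_not_mem hBbin hIB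
    refine ⟨hP, ?_⟩
    set S : Set (Fin n → ℤ) := {u | ∃ a b : Fin n →₀ ℕ, (∀ i, u i = (a i : ℤ) - b i) ∧
          monomial a (1:ℂ) - monomial b 1 ∈ I} with hS
    have hadd : ∀ {u v : Fin n → ℤ},
        u ∈ S → v ∈ S → u + v ∈ S := by
      rintro u v ⟨a, b, hu, ha⟩ ⟨c, d, hv, hc⟩
      refine ⟨a + c, b + d, fun i => ?_, ?_⟩
      · simp [hu i, hv i]; ring
      · have heq : monomial (a + c) (1:ℂ) - monomial (b + d) 1
            = monomial c 1 * (monomial a 1 - monomial b 1)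
              + monomial b 1 * (monomial c 1 - monomial d 1) := by
          rw [mul_sub, mul_sub, monomial_mul, monomial_mul, monomial_mul, monomial_mul,
            add_comm c a, add_comm b c]
          ring_nf
        rw [heq]
        exact add_mem (I.mul_mem_left _ ha) (I.mul_mem_left _ hc)
    have hzero : (0 : Fin n → ℤ) ∈ S := ⟨0, 0, by simp, by simp⟩
    have hneg : ∀ {u : Fin n → ℤ}, u ∈ S → -u ∈ S := by
      rintro u ⟨a, b, hu, ha⟩
      refine ⟨b, a, fun i => by simp [hu i], ?_⟩
      simpa using I.neg_mem ha
    refine ⟨⟨⟨⟨S, fun {u v} => hadd⟩, hzero⟩, fun {u} => hneg⟩, ?_⟩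
    apply le_antisymm
    · conv_lhs => rw [hIB]
      rw [Ideal.span_le]
      intro f hf
      obtain ⟨α, β, rfl⟩ := hBbin f hf
      apply Ideal.subset_span
      exact ⟨α, β, ⟨α, β, fun i => rfl, hIB ▸ Ideal.subset_span hf⟩, rfl⟩
    · rw [latticeIdeal, Ideal.span_le]
      rintro f ⟨α, β, ⟨a, b, hL, hab⟩, rfl⟩
      exact key hP hmono a b α β hab (fun i => hL i)
end

section
/- Fix m₁,…,m_n ∈ ℤ^d and let φ : ℂ[x₁,…,x_n] → ℂ[t₁^{±1},…,t_d^{±1}] be the ℂ-algebra homomorphism determined by φ(x_i) = t^{m_i}, where ℂ[t₁^{±1},…,t_d^{±1}] is the Laurent polynomial ring (the group algebra ℂ[ℤ^d]). Let L = {l ∈ ℤ^n : Σ_{i=1}^n l_i m_i = 0} be the kernel of the homomorphism ℤ^n → ℤ^d sending e_i ↦ m_i. Then ker φ = ⟨x^α − x^β : α, β ∈ ℕ^n, α − β ∈ L⟩, i.e., the kernel is generated by the binomials x^α − x^β with Σ α_i m_i = Σ β_i m_i. -/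
/-!
With `e γ = ∑ γᵢ mᵢ`, the monomial map is `mapDomain e : ℂ[ℕⁿ] → ℂ[ℤᵈ]`. Fix a section `s` of `e`
on its image. Monomial by monomial, `x^γ ≡ x^{s (e γ)}` modulo the binomials, so every `f` is
congruent to `mapDomain s (mapDomain e f)`, which vanishes when `f` lies in the kernel.
-/

open MvPolynomial

/-- The monomial map `ℂ[x₁,…,x_n] → ℂ[t₁^{±1},…,t_d^{±1}]` sending `x_i ↦ t^{m_i}`,
where the Laurent polynomial ring is the additive monoid algebra `ℂ[ℤ^d]`. -/
noncomputable def monomialMap {n d : ℕ} (m : Fin n → Fin d → ℤ) :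
    MvPolynomial (Fin n) ℂ →ₐ[ℂ] AddMonoidAlgebra ℂ (Fin d → ℤ) :=
  aeval (fun i => AddMonoidAlgebra.single (m i) (1 : ℂ))

namespace AddMonoidAlgebra

theorem mem_span_single_sub_single_of_mapDomain_eq_zero {R M N : Type*} [Ring R] [Nonempty M]
    {f : M → N} {x : AddMonoidAlgebra R M} (hx : mapDomain f x = 0) :
    x ∈ Submodule.span R {y | ∃ a b, f a = f b ∧ y = single a (1 : R) - single b 1} := by
  set S := Submodule.span R {y | ∃ a b, f a = f b ∧ y = single a (1 : R) - single b 1}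
  have sub_mem_span (y : AddMonoidAlgebra R M) :
      y - mapDomain (Function.invFun f) (mapDomain f y) ∈ S := by
    induction y using induction_linear with
    | zero => simp
    | add y z hy hz => simpa only [mapDomain_add, add_sub_add_comm] using S.add_mem hy hz
    | single a r =>
      have hgen : single a (1 : R) - single (Function.invFun f (f a)) 1 ∈ S :=
        Submodule.subset_span ⟨_, _, (Function.invFun_eq ⟨a, rfl⟩).symm, rfl⟩
      simpa [mapDomain_single, smul_sub, smul_single] using S.smul_mem r hgen
  simpa [hx, mapDomain_zero] using sub_mem_span x

end AddMonoidAlgebra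

open AddMonoidAlgebra in
theorem MvPolynomial.ker_mapDomainAlgHom {R σ M : Type*} [CommRing R] [AddMonoid M]
    (e : (σ →₀ ℕ) →+ M) :
    RingHom.ker (mapDomainAlgHom R R e : MvPolynomial σ R →ₐ[R] AddMonoidAlgebra R M) =
      Ideal.span {p | ∃ α β, e α = e β ∧ p = monomial α (1 : R) - monomial β 1} := by
  apply le_antisymm
  · intro x hx
    exact Submodule.span_le_restrictScalars R _ _
      (mem_span_single_sub_single_of_mapDomain_eq_zero (RingHom.mem_ker.mp hx))
  · rw [Ideal.span_le]
    rintro _ ⟨α, β, h, rfl⟩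
    rw [SetLike.mem_coe, RingHom.mem_ker, map_sub]
    simp [← single_eq_monomial, h]

noncomputable def exponentHom {n d : ℕ} (m : Fin n → Fin d → ℤ) : (Fin n →₀ ℕ) →+ (Fin d → ℤ) :=
  (Finsupp.linearCombination ℕ m).toAddMonoidHom

theorem exponentHom_apply {n d : ℕ} (m : Fin n → Fin d → ℤ) (γ : Fin n →₀ ℕ) :
    exponentHom m γ = ∑ i, (γ i : ℤ) • m i := by
  simp [exponentHom, Finsupp.linearCombination_apply, Finsupp.sum_fintype]

theorem monomialMap_eq_mapDomainAlgHom {n d : ℕ} (m : Fin n → Fin d → ℤ) :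
    monomialMap m = AddMonoidAlgebra.mapDomainAlgHom ℂ ℂ (exponentHom m) := by
  refine algHom_ext fun i => ?_
  rw [monomialMap, aeval_X, X, ← single_eq_monomial, AddMonoidAlgebra.mapDomainAlgHom_apply,
    AddMonoidAlgebra.mapDomain_single]
  simp [exponentHom]

/-- The kernel of the monomial map `x_i ↦ t^{m_i}` is the (toric) ideal generated by the
binomials `x^α − x^β` with `Σ αᵢ mᵢ = Σ βᵢ mᵢ`, i.e. with `α − β` in the kernel lattice
`L = {l ∈ ℤ^n : Σ lᵢ mᵢ = 0}`. -/
theorem ker_monomialMap {n d : ℕ} (m : Fin n → Fin d → ℤ) :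
    RingHom.ker (monomialMap m) = Ideal.span {f | ∃ α β : Fin n →₀ ℕ,
      (∑ i, (α i : ℤ) • m i) = (∑ i, (β i : ℤ) • m i) ∧
      f = monomial α (1 : ℂ) - monomial β (1 : ℂ)} := by
  rw [monomialMap_eq_mapDomainAlgHom, MvPolynomial.ker_mapDomainAlgHom]
  simp only [exponentHom_apply]
end

section
/- Let σ ⊆ ℝ^n be a rational polyhedral cone, let m ∈ σ^∨ ∩ ℤ^n, and let τ = σ ∩ {x ∈ ℝ^n : ⟨m,x⟩ = 0} be the corresponding face of σ. Then τ^∨ = σ^∨ + ℝ_{≥0}·(−m), i.e., the dual cone of the face τ equals the set of all sums u + λ(−m) with u ∈ σ^∨ and λ ≥ 0. -/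
open Finset

lemma innerR_add_left {n : ℕ} (u v x : Fin n → ℝ) :
    innerR (u + v) x = innerR u x + innerR v x := by
  simp [innerR, add_mul, Finset.sum_add_distrib]

lemma innerR_smul_left {n : ℕ} (c : ℝ) (u x : Fin n → ℝ) :
    innerR (c • u) x = c * innerR u x := by
  simp [innerR, Finset.mul_sum, mul_assoc]

lemma innerR_neg_left {n : ℕ} (u x : Fin n → ℝ) :
    innerR (-u) x = -innerR u x := by
  simp [innerR, Finset.sum_neg_distrib]

lemma innerR_sum_right {n : ℕ} {ι : Type*} (s : Finset ι) (y : Fin n → ℝ)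
    (f : ι → Fin n → ℝ) :
    innerR y (∑ i ∈ s, f i) = ∑ i ∈ s, innerR y (f i) := by
  simp only [innerR]
  rw [Finset.sum_comm]
  congr 1
  ext i
  simp [Finset.mul_sum]

lemma innerR_smul_right {n : ℕ} (c : ℝ) (y x : Fin n → ℝ) :
    innerR y (c • x) = c * innerR y x := by
  simp only [innerR, Pi.smul_apply, smul_eq_mul, Finset.mul_sum]
  congr 1; ext i; ring

/-- Each generator is in the cone. -/
lemma gen_mem_ratCone {n r : ℕ} (a : Fin r → Fin n → ℤ) (i : Fin r) :
    coeR (a i) ∈ ratCone a := by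
  refine ⟨fun j => if j = i then 1 else 0, fun j => by positivity, ?_⟩
  rw [Finset.sum_eq_single i]
  · simp
  · intro j _ hj; simp [hj]
  · simp

/-- Let `σ ⊆ ℝ^n` be a rational polyhedral cone, `m ∈ σ^∨ ∩ ℤ^n`, and
`τ = σ ∩ {x : ⟨m,x⟩ = 0}` the corresponding face. Then
`τ^∨ = σ^∨ + ℝ_{≥0}·(−m)`. -/
theorem dual_of_face {n r : ℕ} (a : Fin r → Fin n → ℤ) (m : Fin n → ℤ)
    (hm : coeR m ∈ dualCone (ratCone a))
    (τ : Set (Fin n → ℝ)) (hτ : τ = ratCone a ∩ {x | innerR (coeR m) x = 0}) :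
    dualCone τ =
      {y | ∃ u ∈ dualCone (ratCone a), ∃ lam : ℝ, 0 ≤ lam ∧ y = u + lam • (-(coeR m))} := by
  subst hτ
  ext y
  constructor
  · intro hy
    -- hy : ∀ x ∈ σ with ⟨m,x⟩ = 0, 0 ≤ ⟨y,x⟩
    -- choose lam big enough
    have hma : ∀ i, 0 ≤ innerR (coeR m) (coeR (a i)) :=
      fun i => hm _ (gen_mem_ratCone a i)
    set t : Fin r → ℝ := fun i =>
      if 0 < innerR (coeR m) (coeR (a i)) then
        max 0 (-(innerR y (coeR (a i))) / innerR (coeR m) (coeR (a i)))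
      else 0 with ht
    have htnn : ∀ i, 0 ≤ t i := by
      intro i; by_cases h : 0 < innerR (coeR m) (coeR (a i)) <;> simp [ht, h]
    set lam : ℝ := ∑ i, t i with hlam
    have hlamnn : 0 ≤ lam := Finset.sum_nonneg fun i _ => htnn i
    have hlamge : ∀ i, t i ≤ lam :=
      fun i => Finset.single_le_sum (fun j _ => htnn j) (Finset.mem_univ i)
    refine ⟨y + lam • coeR m, ?_, lam, hlamnn, ?_⟩
    · -- y + lam • m ∈ σ^∨ : check on generators first
      have hgen : ∀ i, 0 ≤ innerR (y + lam • coeR m) (coeR (a i)) := by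
        intro i
        rw [innerR_add_left, innerR_smul_left]
        by_cases h : 0 < innerR (coeR m) (coeR (a i))
        · have h1 : max 0 (-(innerR y (coeR (a i))) / innerR (coeR m) (coeR (a i))) ≤ lam := by
            have := hlamge i; simpa [ht, h] using this
          have h2 : -(innerR y (coeR (a i))) / innerR (coeR m) (coeR (a i)) ≤ lam :=
            le_trans (le_max_right _ _) h1
          have h3 : -(innerR y (coeR (a i))) ≤ lam * innerR (coeR m) (coeR (a i)) := by
            rw [div_le_iff₀ h] at h2; linarith
          linarith
        · have h0 : innerR (coeR m) (coeR (a i)) = 0 := le_antisymm (not_lt.1 h) (hma i)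
          have : 0 ≤ innerR y (coeR (a i)) :=
            hy _ ⟨gen_mem_ratCone a i, h0⟩
          rw [h0]; linarith
      intro x hx
      obtain ⟨c, hc, rfl⟩ := hx
      rw [innerR_sum_right]
      refine Finset.sum_nonneg fun i _ => ?_
      rw [innerR_smul_right]
      exact mul_nonneg (hc i) (hgen i)
    · module
  · rintro ⟨u, hu, lam, hlamnn, rfl⟩
    rintro x ⟨hxσ, hxm⟩
    rw [innerR_add_left, innerR_smul_left, innerR_neg_left, hxm]
    have := hu x hxσ
    simp only [Set.mem_setOf_eq] at hxm
    linarith [hu x hxσ]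
end
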